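/- The generating function of planted plane trees R(g) = (1 - √(1-4g))/(2g) satisfies R(g) = 1 + g·R(g)² for 0 < g ≤ 1/4, and with g = (1/4)(1 - a²ε²/4), one has g·R(g)² = 1 - aε + O(ε²) as ε → 0⁺, so that the tree two-point function F_tree(s,g,h) = (g·R(g)²)^s·(h·R(h)²)^s with s = ⌊S/ε⌋, h = (1/4)(1 - b²ε²/4) converges to e^{-(a+b)S} as ε → 0⁺. -/

import Mathlib

/-!
Writing `g = (1 - δ²)/4` with `δ = cε/2 ≥ 0` gives `√(1 - 4g) = δ`, hence `R(g) = 2/(1 + δ)` and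
`g R(g)² = (1 - δ)/(1 + δ)`, a smooth function of `ε` with value `1` and slope `-c` at `0`.
Its `⌊S/ε⌋`-th power is `exp (⌊S/ε⌋ · log (g R(g)²))`, and `⌊S/ε⌋ ε → S` while
`log (g R(g)²) / ε → -c`, so the power tends to `e^{-cS}`.
-/

open Real Filter Asymptotics Topology

noncomputable def plantedTreeGF (g : ℝ) : ℝ := (1 - √(1 - 4 * g)) / (2 * g)

lemma plantedTreeGF_eq_one_add {g : ℝ} (hg₀ : 0 < g) (hg : g ≤ 1 / 4) :
    plantedTreeGF g = 1 + g * plantedTreeGF g ^ 2 := by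
  have hsq : √(1 - 4 * g) ^ 2 = 1 - 4 * g := sq_sqrt (by linarith)
  unfold plantedTreeGF
  field_simp
  nlinarith [hsq]

lemma mul_plantedTreeGF_sq {δ : ℝ} (hδ : 0 ≤ δ) :
    1 / 4 * (1 - δ ^ 2) * plantedTreeGF (1 / 4 * (1 - δ ^ 2)) ^ 2 = (1 - δ) / (1 + δ) := by
  rcases eq_or_ne δ 1 with rfl | hδ₁
  · norm_num
  have hsqrt : √(1 - 4 * (1 / 4 * (1 - δ ^ 2))) = δ := by
    rw [show 1 - 4 * (1 / 4 * (1 - δ ^ 2)) = δ ^ 2 by ring, sqrt_sq hδ]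
  have h₁ : 1 - δ ≠ 0 := sub_ne_zero.mpr hδ₁.symm
  have h₂ : 1 + δ ≠ 0 := by positivity
  have h₃ : 1 - δ ^ 2 ≠ 0 := by
    rw [show 1 - δ ^ 2 = (1 - δ) * (1 + δ) by ring]
    exact mul_ne_zero h₁ h₂
  unfold plantedTreeGF
  rw [hsqrt]
  field_simp
  ring

lemma mul_plantedTreeGF_sq_of_mul_nonneg {c ε : ℝ} (h : 0 ≤ c * ε) :
    1 / 4 * (1 - c ^ 2 * ε ^ 2 / 4) * plantedTreeGF (1 / 4 * (1 - c ^ 2 * ε ^ 2 / 4)) ^ 2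
      = (1 - c * ε / 2) / (1 + c * ε / 2) := by
  rw [show c ^ 2 * ε ^ 2 / 4 = (c * ε / 2) ^ 2 by ring]
  exact mul_plantedTreeGF_sq (by positivity)

lemma hasDerivAt_one_sub_div_one_add (c : ℝ) :
    HasDerivAt (fun ε : ℝ => (1 - c * ε / 2) / (1 + c * ε / 2)) (-c) 0 := by
  have hnum : HasDerivAt (fun ε : ℝ => 1 - c * ε / 2) (-(c / 2)) 0 := by
    simpa using ((hasDerivAt_id (0 : ℝ)).const_mul c |>.div_const 2).const_sub 1
  have hden : HasDerivAt (fun ε : ℝ => 1 + c * ε / 2) (c / 2) 0 := by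
    simpa using ((hasDerivAt_id (0 : ℝ)).const_mul c |>.div_const 2).const_add 1
  exact (hnum.div hden (by norm_num)).congr_deriv (by ring)

lemma one_sub_div_one_add_sub_isBigO {c : ℝ} (hc : 0 ≤ c) :
    (fun ε : ℝ => (1 - c * ε / 2) / (1 + c * ε / 2) - (1 - c * ε)) =O[𝓝[>] 0]
      fun ε => ε ^ 2 := by
  refine IsBigO.of_bound (c ^ 2 / 2) ?_
  filter_upwards [self_mem_nhdsWithin] with ε (hε : 0 < ε)
  have hden : 1 ≤ 1 + c * ε / 2 := by nlinarith
  have hdiff : (1 - c * ε / 2) / (1 + c * ε / 2) - (1 - c * ε)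
      = c ^ 2 * ε ^ 2 / 2 / (1 + c * ε / 2) := by
    field_simp
    ring
  rw [hdiff, norm_of_nonneg (by positivity), norm_of_nonneg (by positivity)]
  calc c ^ 2 * ε ^ 2 / 2 / (1 + c * ε / 2) ≤ c ^ 2 * ε ^ 2 / 2 :=
        div_le_self (by positivity) hden
    _ = c ^ 2 / 2 * ε ^ 2 := by ring

lemma tendsto_natFloor_div_mul_nhdsGT_zero {S : ℝ} (hS : 0 ≤ S) :
    Tendsto (fun ε : ℝ => (⌊S / ε⌋₊ : ℝ) * ε) (𝓝[>] 0) (𝓝 S) := by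
  refine ((tendsto_nat_floor_mul_div_atTop hS).comp tendsto_inv_nhdsGT_zero).congr fun ε => ?_
  simp only [Function.comp_apply, div_eq_mul_inv, inv_inv]

theorem tendsto_pow_natFloor_div_of_hasDerivAt {f : ℝ → ℝ} {L S : ℝ} (hf : HasDerivAt f L 0)
    (hf₀ : f 0 = 1) (hS : 0 ≤ S) :
    Tendsto (fun ε => f ε ^ ⌊S / ε⌋₊) (𝓝[>] 0) (𝓝 (exp (S * L))) := by
  have hlog : HasDerivAt (fun ε => log (f ε)) L 0 := by
    simpa [hf₀] using hf.log (by simp [hf₀])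
  have hslope : Tendsto (fun ε => log (f ε) / ε) (𝓝[>] 0) (𝓝 L) :=
    hlog.tendsto_slope_zero_right.congr fun ε => by simp [hf₀, div_eq_inv_mul]
  have hpos : ∀ᶠ ε in 𝓝[>] 0, 0 < f ε :=
    nhdsWithin_le_nhds (hf.continuousAt.eventually (lt_mem_nhds (by simp [hf₀])))
  refine ((continuous_exp.tendsto _).comp
    ((tendsto_natFloor_div_mul_nhdsGT_zero hS).mul hslope)).congr' ?_
  filter_upwards [hpos, self_mem_nhdsWithin] with ε hfε (hε : 0 < ε)
  rw [Function.comp_apply, mul_assoc, mul_div_cancel₀ _ hε.ne', exp_nat_mul, exp_log hfε]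

theorem stmt_14 (a b S : ℝ) (ha : 0 < a) (hb : 0 < b) (hS : 0 < S)
    (R : ℝ → ℝ) (hRdef : ∀ g : ℝ, R g = (1 - Real.sqrt (1 - 4 * g)) / (2 * g)) :
    (∀ g ∈ Set.Ioc (0 : ℝ) (1 / 4), R g = 1 + g * R g ^ 2) ∧
    ((fun ε : ℝ =>
        (1 / 4 * (1 - a ^ 2 * ε ^ 2 / 4)) * R (1 / 4 * (1 - a ^ 2 * ε ^ 2 / 4)) ^ 2
          - (1 - a * ε))
      =O[nhdsWithin 0 (Set.Ioi 0)] fun ε : ℝ => ε ^ 2) ∧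
    Tendsto (fun ε : ℝ =>
        ((1 / 4 * (1 - a ^ 2 * ε ^ 2 / 4)) *
            R (1 / 4 * (1 - a ^ 2 * ε ^ 2 / 4)) ^ 2) ^ (⌊S / ε⌋₊) *
        ((1 / 4 * (1 - b ^ 2 * ε ^ 2 / 4)) *
            R (1 / 4 * (1 - b ^ 2 * ε ^ 2 / 4)) ^ 2) ^ (⌊S / ε⌋₊))
      (nhdsWithin 0 (Set.Ioi 0)) (nhds (Real.exp (-(a + b) * S))) := by
  obtain rfl : R = plantedTreeGF := funext hRdef
  have hweight {c : ℝ} (hc : 0 ≤ c) : ∀ᶠ ε in 𝓝[>] 0,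
      (1 - c * ε / 2) / (1 + c * ε / 2) =
        1 / 4 * (1 - c ^ 2 * ε ^ 2 / 4) * plantedTreeGF (1 / 4 * (1 - c ^ 2 * ε ^ 2 / 4)) ^ 2 := by
    filter_upwards [self_mem_nhdsWithin] with ε (hε : 0 < ε)
    exact (mul_plantedTreeGF_sq_of_mul_nonneg (by positivity)).symm
  have hpow {c : ℝ} (hc : 0 ≤ c) : Tendsto (fun ε =>
      (1 / 4 * (1 - c ^ 2 * ε ^ 2 / 4) * plantedTreeGF (1 / 4 * (1 - c ^ 2 * ε ^ 2 / 4)) ^ 2)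
        ^ ⌊S / ε⌋₊) (𝓝[>] 0) (𝓝 (exp (S * -c))) :=
    (tendsto_pow_natFloor_div_of_hasDerivAt (hasDerivAt_one_sub_div_one_add c) (by norm_num)
      hS.le).congr' ((hweight hc).mono fun ε h => by rw [h])
  refine ⟨fun g hg => plantedTreeGF_eq_one_add hg.1 hg.2, ?_, ?_⟩
  · exact (one_sub_div_one_add_sub_isBigO ha.le).congr'
      ((hweight ha.le).mono fun ε h => congrArg (· - (1 - a * ε)) h) EventuallyEq.rfl
  · rw [show -(a + b) * S = S * -a + S * -b by ring, exp_add]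
    exact (hpow ha.le).mul (hpow hb.le)
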